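/- Let F_R be a rooted graph with λ := lim_{ℓ→∞} λ₁(F_R, ℓ) satisfying λ < −λ₀ for some λ₀ ≥ 2. Then there exists m ∈ ℕ⁺ such that the clique extension (F_R, K_m) has smallest eigenvalue less than −λ₀. -/

import Mathlib

open Matrix Filter
open scoped Classical

noncomputable def adjM {α : Type*} [Fintype α] (G : SimpleGraph α) : Matrix α α ℝ :=
  fun x y => if G.Adj x y then 1 else 0

noncomputable def minEig {α : Type*} [Fintype α] (G : SimpleGraph α) : ℝ :=
  sInf {μ : ℝ | ∃ x : α → ℝ, x ≠ 0 ∧ adjM G *ᵥ x = μ • x}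

/-- The path extension `(F_R, ℓ)`: add a path `v_0 … v_ℓ` (vertices `Fin (ℓ+1)`) to `F`,
joining `v_0` to every vertex of the root set `R`. -/
def pathExt {V : Type*} (F : SimpleGraph V) (R : Set V) (ℓ : ℕ) :
    SimpleGraph (V ⊕ Fin (ℓ + 1)) :=
  SimpleGraph.fromRel (fun x y =>
    match x, y with
    | Sum.inl u, Sum.inl v => F.Adj u v
    | Sum.inl u, Sum.inr i => u ∈ R ∧ (i : ℕ) = 0
    | Sum.inr i, Sum.inr j => (j : ℕ) = (i : ℕ) + 1
    | _, _ => False)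

/-- The clique extension `(F_R, K_m)`: add an `m`-clique to `F`, joining every clique
vertex to every vertex of `R`. -/
def cliqueExt {V : Type*} (F : SimpleGraph V) (R : Set V) (m : ℕ) :
    SimpleGraph (V ⊕ Fin m) :=
  SimpleGraph.fromRel (fun x y =>
    match x, y with
    | Sum.inl u, Sum.inl v => F.Adj u v
    | Sum.inl u, Sum.inr _ => u ∈ R
    | Sum.inr i, Sum.inr j => i ≠ j
    | _, _ => False)


/-!
An eigenvector `x = (z, q)` of `(F_R, ℓ)` for an eigenvalue below `-λ₀` (with `z` on `F`, `q` on the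
path) has `xᵀAx < -λ₀ ‖x‖²`. Since `∑ₖ (qₖ + qₖ₊₁)² ≥ 0`, the path contributes at least
`q₀² - 2‖q‖²` to `xᵀAx`, so `λ₀ ≥ 2` leaves `zᵀA_F z + 2 q₀ ∑_{u ∈ R} z_u + q₀² + λ₀ ‖z‖² < 0`.
Spreading `q₀` evenly over an `m`-clique, the vector `y = (z, q₀/m, …, q₀/m)` on `(F_R, K_m)` has
`yᵀAy + λ₀ ‖y‖²` equal to that negative number plus `(λ₀ - 1) q₀² / m`, which is negative for `m`
large.
-/

namespace Matrix.IsHermitian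

variable {n : Type*} [Fintype n] [DecidableEq n] {A : Matrix n n ℝ}

lemma dotProduct_mulVec_eq_sum_eigenvalues (hA : A.IsHermitian) (x : n → ℝ) :
    x ⬝ᵥ (A *ᵥ x) = ∑ i, hA.eigenvalues i * (⇑(hA.eigenvectorBasis i) ⬝ᵥ x) ^ 2 := by
  have h := hA.eigenvectorBasis.sum_inner_mul_inner (WithLp.toLp 2 x) (WithLp.toLp 2 (A *ᵥ x))
  rw [EuclideanSpace.inner_toLp_toLp, star_trivial] at h
  rw [dotProduct_comm, ← h]
  refine Finset.sum_congr rfl fun i _ => ?_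
  have hAT : Aᵀ = A := by simpa [conjTranspose_eq_transpose_of_trivial] using hA.eq
  simp only [EuclideanSpace.inner_eq_star_dotProduct, star_trivial]
  rw [dotProduct_comm (A *ᵥ x), dotProduct_mulVec, ← mulVec_transpose, hAT,
    hA.mulVec_eigenvectorBasis, smul_dotProduct, smul_eq_mul]
  ring

lemma dotProduct_self_eq_sum_eigenvectorBasis (hA : A.IsHermitian) (x : n → ℝ) :
    x ⬝ᵥ x = ∑ i, (⇑(hA.eigenvectorBasis i) ⬝ᵥ x) ^ 2 := by
  have h := hA.eigenvectorBasis.sum_inner_mul_inner (WithLp.toLp 2 x) (WithLp.toLp 2 x)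
  rw [EuclideanSpace.inner_toLp_toLp, star_trivial] at h
  rw [← h]
  refine Finset.sum_congr rfl fun i _ => ?_
  simp only [EuclideanSpace.inner_eq_star_dotProduct, star_trivial]
  rw [dotProduct_comm x, sq]

lemma exists_eigenvalues_mul_dotProduct_self_le [Nonempty n] (hA : A.IsHermitian) :
    ∃ i, ∀ x, hA.eigenvalues i * (x ⬝ᵥ x) ≤ x ⬝ᵥ (A *ᵥ x) := by
  obtain ⟨i, -, hi⟩ := Finset.univ.exists_min_image hA.eigenvalues Finset.univ_nonempty
  refine ⟨i, fun x => ?_⟩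
  rw [hA.dotProduct_mulVec_eq_sum_eigenvalues, hA.dotProduct_self_eq_sum_eigenvectorBasis,
    Finset.mul_sum]
  exact Finset.sum_le_sum fun j _ => by gcongr; exact hi j (Finset.mem_univ j)

end Matrix.IsHermitian

section MinEig

variable {α : Type*} [Fintype α]

lemma dotProduct_self_pos {x : α → ℝ} (hx : x ≠ 0) : 0 < x ⬝ᵥ x :=
  (dotProduct_self_star_nonneg x).lt_of_ne' (dotProduct_self_eq_zero.not.2 hx)

lemma adjM_isHermitian (G : SimpleGraph α) : (adjM G).IsHermitian := by
  ext a b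
  simp only [adjM, conjTranspose_apply, star_trivial, G.adj_comm]

lemma exists_eigenvalue_mul_dotProduct_self_le [Nonempty α] (G : SimpleGraph α) :
    ∃ t ∈ {μ : ℝ | ∃ x : α → ℝ, x ≠ 0 ∧ adjM G *ᵥ x = μ • x},
      ∀ x, t * (x ⬝ᵥ x) ≤ x ⬝ᵥ (adjM G *ᵥ x) := by
  have hA := adjM_isHermitian G
  obtain ⟨i, hi⟩ := hA.exists_eigenvalues_mul_dotProduct_self_le
  exact ⟨hA.eigenvalues i, ⟨_, fun h => hA.eigenvectorBasis.orthonormal.ne_zero i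
    (by simpa using congrArg (WithLp.toLp 2) h), hA.mulVec_eigenvectorBasis i⟩, hi⟩

lemma minEig_mul_dotProduct_self_le [Nonempty α] (G : SimpleGraph α) (x : α → ℝ) :
    minEig G * (x ⬝ᵥ x) ≤ x ⬝ᵥ (adjM G *ᵥ x) := by
  obtain ⟨t, ht, hle⟩ := exists_eigenvalue_mul_dotProduct_self_le G
  have hbdd : t ∈ lowerBounds {μ : ℝ | ∃ x : α → ℝ, x ≠ 0 ∧ adjM G *ᵥ x = μ • x} := by
    rintro μ ⟨y, hy, hμ⟩
    have := hle y
    rw [hμ, dotProduct_smul, smul_eq_mul] at this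
    exact le_of_mul_le_mul_right this (dotProduct_self_pos hy)
  calc minEig G * (x ⬝ᵥ x) ≤ t * (x ⬝ᵥ x) := by
        gcongr
        · exact dotProduct_self_star_nonneg x
        · exact csInf_le ⟨t, hbdd⟩ ht
    _ ≤ _ := hle x

theorem minEig_lt_iff [Nonempty α] (G : SimpleGraph α) (a : ℝ) :
    minEig G < a ↔ ∃ x : α → ℝ, x ⬝ᵥ (adjM G *ᵥ x) < a * (x ⬝ᵥ x) := by
  constructor
  · intro h
    obtain ⟨t, ht, -⟩ := exists_eigenvalue_mul_dotProduct_self_le G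
    obtain ⟨μ, ⟨x, hx, hμ⟩, hμa⟩ := exists_lt_of_csInf_lt ⟨t, ht⟩ h
    refine ⟨x, ?_⟩
    rw [hμ, dotProduct_smul, smul_eq_mul]
    exact mul_lt_mul_of_pos_right hμa (dotProduct_self_pos hx)
  · rintro ⟨x, hx⟩
    exact lt_of_mul_lt_mul_right ((minEig_mul_dotProduct_self_le G x).trans_lt hx)
      (dotProduct_self_star_nonneg x)

end MinEig

lemma dotProduct_adjM_mulVec {α : Type*} [Fintype α] (G : SimpleGraph α) (x : α → ℝ) :
    x ⬝ᵥ (adjM G *ᵥ x) = ∑ a, ∑ b, if G.Adj a b then x a * x b else 0 := by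
  simp only [dotProduct, mulVec, adjM, Finset.mul_sum]
  refine Finset.sum_congr rfl fun a _ => Finset.sum_congr rfl fun b _ => ?_
  split_ifs <;> ring

lemma sumElim_dotProduct_adjM_mulVec {V W : Type*} [Fintype V] [Fintype W]
    (G : SimpleGraph (V ⊕ W)) (z : V → ℝ) (w : W → ℝ) :
    Sum.elim z w ⬝ᵥ (adjM G *ᵥ Sum.elim z w) =
      z ⬝ᵥ (adjM (G.comap Sum.inl) *ᵥ z)
        + 2 * ∑ u, ∑ i, (if G.Adj (.inl u) (.inr i) then z u * w i else 0)
        + w ⬝ᵥ (adjM (G.comap Sum.inr) *ᵥ w) := by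
  simp only [dotProduct_adjM_mulVec, Fintype.sum_sum_type, Sum.elim_inl, Sum.elim_inr,
    SimpleGraph.comap_adj, Finset.sum_add_distrib]
  rw [Finset.sum_comm (f := fun i u => if G.Adj (.inr i) (.inl u) then w i * z u else 0)]
  have hsymm (u : V) (i : W) : (if G.Adj (.inr i) (.inl u) then w i * z u else 0)
      = if G.Adj (.inl u) (.inr i) then z u * w i else 0 := by
    rw [G.adj_comm, mul_comm]
  simp only [hsymm]
  ring

lemma const_dotProduct_adjM_top_mulVec {α : Type*} [Fintype α] (c : ℝ) :
    (fun _ => c) ⬝ᵥ (adjM (⊤ : SimpleGraph α) *ᵥ fun _ => c)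
      = Fintype.card α * (Fintype.card α - 1) * c ^ 2 := by
  have hrow (a : α) : ∑ b, (if a ≠ b then c * c else 0) = (Fintype.card α - 1) * c ^ 2 := by
    have hsub (b : α) : (if a ≠ b then c * c else 0) = c * c - if a = b then c * c else 0 := by
      split_ifs <;> simp_all
    simp only [hsub, Finset.sum_sub_distrib, Finset.sum_ite_eq, Finset.mem_univ, if_true,
      Finset.sum_const, Finset.card_univ, nsmul_eq_mul]
    ring
  simp only [dotProduct_adjM_mulVec, SimpleGraph.top_adj, hrow, Finset.sum_const,
    Finset.card_univ, nsmul_eq_mul]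
  ring

lemma dotProduct_adjM_pathGraph_mulVec (n : ℕ) (q : Fin (n + 1) → ℝ) :
    q ⬝ᵥ (adjM (SimpleGraph.pathGraph (n + 1)) *ᵥ q)
      = 2 * ∑ k : Fin n, q k.castSucc * q k.succ := by
  have hsplit (i j : Fin (n + 1)) :
      (if (SimpleGraph.pathGraph (n + 1)).Adj i j then q i * q j else 0)
        = (if (i : ℕ) + 1 = j then q i * q j else 0)
          + (if (j : ℕ) + 1 = i then q j * q i else 0) := by
    rw [SimpleGraph.pathGraph_adj]
    split_ifs <;> first | omega | ring
  have hsucc : ∑ i : Fin (n + 1), ∑ j : Fin (n + 1), (if (i : ℕ) + 1 = j then q i * q j else 0)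
      = ∑ k : Fin n, q k.castSucc * q k.succ := by
    have hcast (i : Fin (n + 1)) (k : Fin n) : (i : ℕ) + 1 = k.succ ↔ i = k.castSucc := by
      simp [Fin.ext_iff]
    rw [Finset.sum_comm, Fin.sum_univ_succ]
    simp only [hcast]
    simp
  rw [dotProduct_adjM_mulVec]
  simp only [hsplit, Finset.sum_add_distrib]
  rw [Finset.sum_comm (f := fun i j : Fin (n + 1) => if (j : ℕ) + 1 = i then q j * q i else 0),
    hsucc]
  ring

lemma sq_sub_two_mul_dotProduct_self_le_pathGraph (n : ℕ) (q : Fin (n + 1) → ℝ) :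
    q 0 ^ 2 - 2 * (q ⬝ᵥ q) ≤ q ⬝ᵥ (adjM (SimpleGraph.pathGraph (n + 1)) *ᵥ q) := by
  have hsq : 0 ≤ ∑ k : Fin n, (q k.castSucc + q k.succ) ^ 2 + q (Fin.last n) ^ 2 := by positivity
  have hcast : q ⬝ᵥ q = ∑ k : Fin n, q k.castSucc ^ 2 + q (Fin.last n) ^ 2 := by
    simp only [dotProduct, Fin.sum_univ_castSucc, sq]
  have hsucc : q ⬝ᵥ q = q 0 ^ 2 + ∑ k : Fin n, q k.succ ^ 2 := by
    simp only [dotProduct, Fin.sum_univ_succ, sq]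
  rw [dotProduct_adjM_pathGraph_mulVec]
  simp only [add_sq, mul_assoc, Finset.sum_add_distrib, ← Finset.mul_sum] at hsq
  linarith

section Extensions

variable {V : Type*} (F : SimpleGraph V) (R : Set V)

@[simp] lemma pathExt_adj_inl_inl {ℓ : ℕ} {u v : V} :
    (pathExt F R ℓ).Adj (.inl u) (.inl v) ↔ F.Adj u v := by
  simp [pathExt, F.adj_comm v u, and_iff_right_of_imp F.ne_of_adj]

@[simp] lemma pathExt_adj_inl_inr {ℓ : ℕ} {u : V} {i : Fin (ℓ + 1)} :
    (pathExt F R ℓ).Adj (.inl u) (.inr i) ↔ u ∈ R ∧ i = 0 := by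
  simp [pathExt]

@[simp] lemma pathExt_adj_inr_inr {ℓ : ℕ} {i j : Fin (ℓ + 1)} :
    (pathExt F R ℓ).Adj (.inr i) (.inr j) ↔ (SimpleGraph.pathGraph (ℓ + 1)).Adj i j := by
  simp only [pathExt, SimpleGraph.fromRel_adj, SimpleGraph.pathGraph_adj, ne_eq, Sum.inr.injEq,
    Fin.ext_iff]
  omega

@[simp] lemma cliqueExt_adj_inl_inl {m : ℕ} {u v : V} :
    (cliqueExt F R m).Adj (.inl u) (.inl v) ↔ F.Adj u v := by
  simp [cliqueExt, F.adj_comm v u, and_iff_right_of_imp F.ne_of_adj]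

@[simp] lemma cliqueExt_adj_inl_inr {m : ℕ} {u : V} {i : Fin m} :
    (cliqueExt F R m).Adj (.inl u) (.inr i) ↔ u ∈ R := by
  simp [cliqueExt]

@[simp] lemma cliqueExt_adj_inr_inr {m : ℕ} {i j : Fin m} :
    (cliqueExt F R m).Adj (.inr i) (.inr j) ↔ i ≠ j := by
  simp +contextual [cliqueExt]

lemma pathExt_comap_inl (ℓ : ℕ) : (pathExt F R ℓ).comap Sum.inl = F := by ext; simp

lemma pathExt_comap_inr (ℓ : ℕ) : (pathExt F R ℓ).comap Sum.inr = .pathGraph (ℓ + 1) := by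
  ext; simp

lemma cliqueExt_comap_inl (m : ℕ) : (cliqueExt F R m).comap Sum.inl = F := by ext; simp

lemma cliqueExt_comap_inr (m : ℕ) : (cliqueExt F R m).comap Sum.inr = ⊤ := by ext; simp

variable [Fintype V]

lemma dotProduct_adjM_pathExt_mulVec (ℓ : ℕ) (z : V → ℝ) (q : Fin (ℓ + 1) → ℝ) :
    Sum.elim z q ⬝ᵥ (adjM (pathExt F R ℓ) *ᵥ Sum.elim z q) =
      z ⬝ᵥ (adjM F *ᵥ z) + 2 * (q 0 * ∑ u with u ∈ R, z u)
        + q ⬝ᵥ (adjM (.pathGraph (ℓ + 1)) *ᵥ q) := by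
  rw [sumElim_dotProduct_adjM_mulVec, pathExt_comap_inl, pathExt_comap_inr]
  simp [Finset.sum_filter, Finset.mul_sum, ite_and, mul_comm, mul_left_comm]

lemma dotProduct_adjM_cliqueExt_mulVec (m : ℕ) (z : V → ℝ) (c : ℝ) :
    Sum.elim z (fun _ => c) ⬝ᵥ (adjM (cliqueExt F R m) *ᵥ Sum.elim z (fun _ => c)) =
      z ⬝ᵥ (adjM F *ᵥ z) + 2 * (m * c * ∑ u with u ∈ R, z u) + m * (m - 1) * c ^ 2 := by
  rw [sumElim_dotProduct_adjM_mulVec, cliqueExt_comap_inl, cliqueExt_comap_inr,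
    const_dotProduct_adjM_top_mulVec]
  simp only [cliqueExt_adj_inl_inr, Finset.sum_filter, Finset.mul_sum, Finset.sum_const,
    Finset.card_univ, Fintype.card_fin, nsmul_eq_mul]
  congr 2
  exact Finset.sum_congr rfl fun u _ => by split_ifs <;> ring

lemma eventually_minEig_cliqueExt_lt {a : ℝ} (z : V → ℝ) (t : ℝ)
    (h : z ⬝ᵥ (adjM F *ᵥ z) + 2 * (t * ∑ u with u ∈ R, z u) + t ^ 2 < a * (z ⬝ᵥ z)) :
    ∀ᶠ m in atTop, minEig (cliqueExt F R m) < a := by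
  set D := z ⬝ᵥ (adjM F *ᵥ z) + 2 * (t * ∑ u with u ∈ R, z u) + t ^ 2 - a * (z ⬝ᵥ z)
  have hlim : Tendsto (fun m : ℕ => D - (1 + a) * t ^ 2 / m) atTop (nhds D) := by
    simpa using (tendsto_const_nhds (x := D)).sub
      (tendsto_const_div_atTop_nhds_zero_nat ((1 + a) * t ^ 2))
  filter_upwards [hlim.eventually_lt_const (show D < 0 by linarith), eventually_gt_atTop 0]
    with m hm hm0
  have : NeZero m := ⟨hm0.ne'⟩
  have hm' : (m : ℝ) ≠ 0 := by positivity
  have hconst : ((fun _ => t / m) : Fin m → ℝ) ⬝ᵥ (fun _ => t / m) = m * (t / m) ^ 2 := by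
    simp [dotProduct, sq]
  rw [minEig_lt_iff]
  refine ⟨Sum.elim z fun _ => t / m, ?_⟩
  rw [dotProduct_adjM_cliqueExt_mulVec, sumElim_dotProduct_sumElim, hconst, ← sub_neg]
  refine lt_of_eq_of_lt ?_ hm
  simp only [D]
  field_simp
  ring

end Extensions

theorem stmt10_general {V : Type*} [Fintype V] (F : SimpleGraph V) (R : Set V)
    (lam lam₀ : ℝ) (hlam₀ : 2 ≤ lam₀)
    (hlim : Filter.Tendsto (fun ℓ => minEig (pathExt F R ℓ)) Filter.atTop (nhds lam))
    (h : lam < -lam₀) :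
    ∃ m : ℕ, 0 < m ∧ minEig (cliqueExt F R m) < -lam₀ := by
  obtain ⟨ℓ, hℓ⟩ := (hlim.eventually_lt_const h).exists
  obtain ⟨x, hx⟩ := (minEig_lt_iff _ _).1 hℓ
  set z := x ∘ Sum.inl
  set q := x ∘ Sum.inr
  rw [← Sum.elim_comp_inl_inr x, dotProduct_adjM_pathExt_mulVec, sumElim_dotProduct_sumElim] at hx
  have hpath := sq_sub_two_mul_dotProduct_self_le_pathGraph ℓ q
  have hq : 0 ≤ q ⬝ᵥ q := dotProduct_self_star_nonneg q
  have hclique : z ⬝ᵥ (adjM F *ᵥ z) + 2 * (q 0 * ∑ u with u ∈ R, z u) + q 0 ^ 2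
      < -lam₀ * (z ⬝ᵥ z) := by
    nlinarith [mul_nonneg (sub_nonneg.2 hlam₀) hq]
  obtain ⟨m, hlt, hpos⟩ :=
    ((eventually_minEig_cliqueExt_lt F R z (q 0) hclique).and (eventually_gt_atTop 0)).exists
  exact ⟨m, hpos, hlt⟩

/-- If `lim_{ℓ→∞} λ₁(F_R, ℓ) < -λ₀` with `λ₀ ≥ 2`, then some clique extension
`(F_R, K_m)` has smallest eigenvalue `< -λ₀`. -/
theorem stmt10 {V : Type*} [Fintype V] (F : SimpleGraph V) (R : Set V) (hR : R.Nonempty)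
    (lam lam₀ : ℝ) (hlam₀ : 2 ≤ lam₀)
    (hlim : Filter.Tendsto (fun ℓ => minEig (pathExt F R ℓ)) Filter.atTop (nhds lam))
    (h : lam < -lam₀) :
    ∃ m : ℕ, 0 < m ∧ minEig (cliqueExt F R m) < -lam₀ :=
  stmt10_general F R lam lam₀ hlam₀ hlim h
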